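/- arXiv:1310.8248 — 4 statements merged into one kernel-verified Lean document; each statement's English description precedes it below -/
import Mathlib

section
/- Let λ ∈ (0,1), D⁺, D⁻ > 0, α = α(λ), T > 0, and let u₀ ∈ W². Then there exists a constant C > 0 such that for all t ∈ (0,T], sup_{x ≠ 0} |∂u/∂x(t,x)| ≤ (C/√t)·(‖u₀′‖_{L¹(ℝ)} + ‖u₀″‖_{L¹(ℝ)}), where u(t,x) = ∫_ℝ u₀(y)·q^α(t,x,y) dy. -/
/-!
For `x > 0` the kernel `q^α(t, x, ·)` is an explicit combination of the Gaussians
`φ_t(y/a ∓ x/a)` (for `y > 0`) and `φ_t(y/b - x/a)` (for `y ≤ 0`), where `a = √D⁺`, `b = √D⁻`.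
Gaussian domination lets us differentiate under the integral:
`∂ₓu(t, x) = ∫ u₀(y) ∂ₓq(t, x, y) dy`. The kernel `∂ₓq(t, x, ·)` has total integral
proportional to `2(1 - α) - 1 + (2α - 1) = 0`, so `u₀` may be replaced by `u₀ - u₀(0)`, which is
bounded by `‖u₀′‖_{L¹}`; and `∫ |∂ₓq(t, x, y)| dy ≤ 4 a⁻¹ ∫ |φ_t′| = 8 a⁻¹ φ_t(0) ≤ 8 / (a √t)`.
The case `x < 0` reduces to `x > 0` by the reflection `(x, y) ↦ (-x, -y)`, which exchanges `D⁺`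
and `D⁻` and replaces `α` by `1 - α`.
-/

open MeasureTheory Real Filter Set

noncomputable def phiK (t z : ℝ) : ℝ :=
  (Real.sqrt (2 * Real.pi * t))⁻¹ * Real.exp (-(z ^ 2) / (2 * t))

noncomputable def pSkew (α t x y : ℝ) : ℝ :=
  if 0 < x ∧ 0 < y then phiK t (y - x) + (2 * α - 1) * phiK t (x + y)
  else if x < 0 ∧ y < 0 then phiK t (y - x) - (2 * α - 1) * phiK t (x + y)
  else if x ≤ 0 ∧ 0 < y then 2 * α * phiK t (y - x)
  else 2 * (1 - α) * phiK t (y - x)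

noncomputable def Dfun (Dp Dm x : ℝ) : ℝ := if 0 < x then Dp else Dm

noncomputable def qSkew (Dp Dm α t x y : ℝ) : ℝ :=
  (Real.sqrt (Dfun Dp Dm y))⁻¹ *
    pSkew α t (x / Real.sqrt (Dfun Dp Dm x)) (y / Real.sqrt (Dfun Dp Dm y))

noncomputable def alphaOf (lam Dp Dm : ℝ) : ℝ :=
  lam * Real.sqrt Dm / (lam * Real.sqrt Dm + (1 - lam) * Real.sqrt Dp)

/-- Membership of `u₀` in the class `W²`, witnessed by its first two derivatives
`g1 = u₀′` and `g2 = u₀″` away from the interface at `0`. -/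
def MemW2 (lam : ℝ) (u₀ g1 g2 : ℝ → ℝ) : Prop :=
  Continuous u₀ ∧
  (∀ x : ℝ, x ≠ 0 → HasDerivAt u₀ (g1 x) x) ∧
  (∀ x : ℝ, x ≠ 0 → HasDerivAt g1 (g2 x) x) ∧
  ContinuousOn g2 {(0 : ℝ)}ᶜ ∧
  (∃ M : ℝ, ∀ x : ℝ, x ≠ 0 → |u₀ x| ≤ M ∧ |g1 x| ≤ M ∧ |g2 x| ≤ M) ∧
  Integrable g1 ∧ Integrable g2 ∧ MemLp g1 2 ∧ MemLp g2 2 ∧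
  (∃ Lp Lm : ℝ, Tendsto g1 (nhdsWithin 0 (Ioi 0)) (nhds Lp) ∧
    Tendsto g1 (nhdsWithin 0 (Iio 0)) (nhds Lm) ∧ lam * Lp = (1 - lam) * Lm)

open Topology

noncomputable def phiKDeriv (t z : ℝ) : ℝ := -(z / t) * phiK t z

lemma phiK_nonneg (t z : ℝ) : 0 ≤ phiK t z := by
  unfold phiK; positivity

lemma phiK_neg (t z : ℝ) : phiK t (-z) = phiK t z := by
  simp [phiK]

lemma continuous_phiK (t : ℝ) : Continuous (phiK t) := by
  unfold phiK; fun_prop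

lemma continuous_phiKDeriv (t : ℝ) : Continuous (phiKDeriv t) := by
  unfold phiKDeriv phiK; fun_prop

lemma hasDerivAt_phiK (t z : ℝ) : HasDerivAt (phiK t) (phiKDeriv t z) z := by
  refine ((((hasDerivAt_pow 2 z).neg.div_const (2 * t)).exp).const_mul
    (√(2 * π * t))⁻¹).congr_deriv ?_
  simp only [phiKDeriv, phiK, Pi.neg_apply]
  ring

lemma hasDerivAt_phiK_comp_div_add (t c : ℝ) {a : ℝ} (ha : a ≠ 0) (y : ℝ) :
    HasDerivAt (fun y => a * phiK t (y / a + c)) (phiKDeriv t (y / a + c)) y := by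
  refine (((hasDerivAt_phiK t (y / a + c)).comp y
    (((hasDerivAt_id y).div_const a).add_const c)).const_mul a).congr_deriv ?_
  field_simp

lemma integral_Ioi_eq_neg_of_hasDerivAt {f f' : ℝ → ℝ} (hderiv : ∀ x, HasDerivAt f (f' x) x)
    (hf : Integrable f) (hf' : Integrable f') (a : ℝ) : ∫ x in Ioi a, f' x = -f a := by
  rw [integral_Ioi_of_hasDerivAt_of_tendsto (hderiv a).continuousAt.continuousWithinAt
    (fun x _ => hderiv x) hf'.integrableOn
    (tendsto_zero_of_hasDerivAt_of_integrableOn_Ioi (fun x _ => hderiv x) hf'.integrableOn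
      (hf.integrableOn (s := Ioi a))), zero_sub]

lemma integral_Iic_eq_of_hasDerivAt {f f' : ℝ → ℝ} (hderiv : ∀ x, HasDerivAt f (f' x) x)
    (hf : Integrable f) (hf' : Integrable f') (a : ℝ) : ∫ x in Iic a, f' x = f a := by
  rw [integral_Iic_of_hasDerivAt_of_tendsto (hderiv a).continuousAt.continuousWithinAt
    (fun x _ => hderiv x) hf'.integrableOn
    (tendsto_zero_of_hasDerivAt_of_integrableOn_Iic (fun x _ => hderiv x) hf'.integrableOn
      (hf.integrableOn (s := Iic a))), sub_zero]

section CompDiv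

variable {f : ℝ → ℝ} {a : ℝ}

lemma integrable_comp_div_add (hf : Integrable f) (ha : a ≠ 0) (c : ℝ) :
    Integrable (fun y => f (y / a + c)) :=
  (hf.comp_add_right c).comp_div ha

lemma integrable_comp_div_sub (hf : Integrable f) (ha : a ≠ 0) (c : ℝ) :
    Integrable (fun y => f (y / a - c)) :=
  (hf.comp_sub_right c).comp_div ha

lemma integral_comp_div_add (f : ℝ → ℝ) (ha : 0 < a) (c : ℝ) :
    ∫ y, f (y / a + c) = a * ∫ u, f u := by
  rw [Measure.integral_comp_div (fun u => f (u + c)), integral_add_right_eq_self, abs_of_pos ha,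
    smul_eq_mul]

lemma integral_comp_div_sub (f : ℝ → ℝ) (ha : 0 < a) (c : ℝ) :
    ∫ y, f (y / a - c) = a * ∫ u, f u := by
  rw [Measure.integral_comp_div (fun u => f (u - c)), integral_sub_right_eq_self, abs_of_pos ha,
    smul_eq_mul]

end CompDiv

lemma abs_le_exp_sq_div_four (v : ℝ) : |v| ≤ exp (v ^ 2 / 4) := by
  nlinarith [add_one_le_exp (v ^ 2 / 4), sq_nonneg (|v| - 2), sq_abs v]

section GaussianKernel

variable {t : ℝ}

lemma phiK_zero_le (ht : 0 < t) : phiK t 0 ≤ (√t)⁻¹ := by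
  have h : phiK t 0 = (√(2 * π * t))⁻¹ := by simp [phiK]
  rw [h]
  gcongr
  nlinarith [pi_gt_three]

lemma integrable_phiK (ht : 0 < t) : Integrable (phiK t) := by
  have h := (integrable_exp_neg_mul_sq (b := 1 / (2 * t)) (by positivity)).const_mul
    (√(2 * π * t))⁻¹
  convert h using 2 with z
  simp only [phiK]
  ring_nf

lemma integrable_phiKDeriv (ht : 0 < t) : Integrable (phiKDeriv t) := by
  have h := (integrable_mul_exp_neg_mul_sq (b := 1 / (2 * t)) (by positivity)).const_mul
    (-(t⁻¹ * (√(2 * π * t))⁻¹))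
  convert h using 2 with z
  simp only [phiKDeriv, phiK]
  ring_nf

lemma phiKDeriv_nonpos (ht : 0 < t) {u : ℝ} (hu : 0 ≤ u) : phiKDeriv t u ≤ 0 :=
  mul_nonpos_of_nonpos_of_nonneg (neg_nonpos.2 (by positivity)) (phiK_nonneg t u)

lemma phiKDeriv_nonneg (ht : 0 < t) {u : ℝ} (hu : u ≤ 0) : 0 ≤ phiKDeriv t u :=
  mul_nonneg (neg_nonneg.2 (div_nonpos_of_nonpos_of_nonneg hu ht.le)) (phiK_nonneg t u)

lemma integral_Ioi_phiKDeriv_comp (ht : 0 < t) {a : ℝ} (ha : 0 < a) (c : ℝ) :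
    ∫ y in Ioi 0, phiKDeriv t (y / a + c) = -(a * phiK t c) := by
  simpa using integral_Ioi_eq_neg_of_hasDerivAt (hasDerivAt_phiK_comp_div_add t c ha.ne')
    ((integrable_comp_div_add (integrable_phiK ht) ha.ne' c).const_mul a)
    (integrable_comp_div_add (integrable_phiKDeriv ht) ha.ne' c) 0

lemma integral_Iic_phiKDeriv_comp (ht : 0 < t) {a : ℝ} (ha : 0 < a) (c : ℝ) :
    ∫ y in Iic 0, phiKDeriv t (y / a + c) = a * phiK t c := by
  simpa using integral_Iic_eq_of_hasDerivAt (hasDerivAt_phiK_comp_div_add t c ha.ne')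
    ((integrable_comp_div_add (integrable_phiK ht) ha.ne' c).const_mul a)
    (integrable_comp_div_add (integrable_phiKDeriv ht) ha.ne' c) 0

lemma integral_abs_phiKDeriv (ht : 0 < t) : ∫ u, |phiKDeriv t u| = 2 * phiK t 0 := by
  have hIoi : ∫ u in Ioi 0, |phiKDeriv t u| = phiK t 0 := by
    rw [setIntegral_congr_fun measurableSet_Ioi fun u (hu : 0 < u) =>
      abs_of_nonpos (phiKDeriv_nonpos ht hu.le), integral_neg, neg_eq_iff_eq_neg]
    simpa using integral_Ioi_phiKDeriv_comp ht one_pos 0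
  have hIic : ∫ u in Iic 0, |phiKDeriv t u| = phiK t 0 := by
    rw [setIntegral_congr_fun measurableSet_Iic fun u (hu : u ≤ 0) =>
      abs_of_nonneg (phiKDeriv_nonneg ht hu)]
    simpa using integral_Iic_phiKDeriv_comp ht one_pos 0
  rw [← integral_add_compl measurableSet_Ioi (integrable_phiKDeriv ht).abs, compl_Ioi, hIoi,
    hIic]
  ring

lemma exists_integrable_bound_phiKDeriv (ht : 0 < t) (S : ℝ) :
    ∃ g : ℝ → ℝ, Integrable g ∧ ∀ u w, |u - w| ≤ S → |phiKDeriv t u| ≤ g w := by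
  refine ⟨fun w => (√(2 * π * t))⁻¹ / √t * exp (S ^ 2 / (4 * t)) * exp (-(1 / (8 * t)) * w ^ 2),
    (integrable_exp_neg_mul_sq (by positivity)).const_mul _, fun u w huw => ?_⟩
  have hst : 0 < √t := sqrt_pos.2 ht
  have hu : |u| ≤ √t * exp (u ^ 2 / (4 * t)) := by
    have h := abs_le_exp_sq_div_four (u / √t)
    rwa [abs_div, abs_of_pos hst, div_pow, sq_sqrt ht.le, div_div, mul_comm t,
      div_le_iff₀ hst, mul_comm] at h
  have hw : w ^ 2 ≤ 2 * u ^ 2 + 2 * S ^ 2 := by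
    have h := sq_le_sq' (abs_le.1 huw).1 (abs_le.1 huw).2
    nlinarith [sq_nonneg (u + (u - w))]
  have hexp : exp (u ^ 2 / (4 * t)) * exp (-(u ^ 2) / (2 * t)) ≤
      exp (S ^ 2 / (4 * t)) * exp (-(1 / (8 * t)) * w ^ 2) := by
    rw [← exp_add, ← exp_add, exp_le_exp]
    field_simp
    linarith
  calc |phiKDeriv t u| = |u| / t * phiK t u := by
        rw [phiKDeriv, abs_mul, abs_neg, abs_div, abs_of_pos ht, abs_of_nonneg (phiK_nonneg t u)]
    _ ≤ √t * exp (u ^ 2 / (4 * t)) / t * phiK t u := by gcongr; exact phiK_nonneg t u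
    _ = (√(2 * π * t))⁻¹ / √t * (exp (u ^ 2 / (4 * t)) * exp (-(u ^ 2) / (2 * t))) := by
        rw [phiK]
        field_simp
        rw [sq_sqrt ht.le]
    _ ≤ _ := by
        simpa only [mul_assoc] using mul_le_mul_of_nonneg_left hexp
          (by positivity : 0 ≤ (√(2 * π * t))⁻¹ / √t)

end GaussianKernel

/-- For `x > 0` and `a = √D⁺`, `b = √D⁻`, `β = 2α - 1`, `γ = 2(1 - α)`, the kernel
`q^α(t, x, ·)` is `skewKernelPos a b β γ (phiK t) x`, and its `x`-derivative is again of this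
shape, with `phiKDeriv t` in place of `phiK t`. -/
noncomputable def skewKernelPos (a b β γ : ℝ) (f : ℝ → ℝ) (z y : ℝ) : ℝ :=
  if 0 < y then a⁻¹ * (f (y / a - z / a) + β * f (y / a + z / a))
  else b⁻¹ * (γ * f (y / b - z / a))

section SkewKernelPos

variable {a b : ℝ} {f : ℝ → ℝ}

lemma hasDerivAt_skewKernelPos {f' : ℝ → ℝ} (hf : ∀ u, HasDerivAt f (f' u) u) (β γ y z : ℝ) :
    HasDerivAt (fun z => skewKernelPos a b β γ f z y)
      (-a⁻¹ * skewKernelPos a b (-β) γ f' z y) z := by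
  have hdiv := (hasDerivAt_id' z).div_const a
  by_cases hy : 0 < y
  · simp only [skewKernelPos, if_pos hy]
    refine ((((hf _).comp z (hdiv.const_sub (y / a))).add
      (((hf _).comp z (hdiv.const_add (y / a))).const_mul β)).const_mul a⁻¹).congr_deriv ?_
    ring
  · simp only [skewKernelPos, if_neg hy]
    refine ((((hf _).comp z (hdiv.const_sub (y / b))).const_mul γ).const_mul b⁻¹).congr_deriv ?_
    ring

lemma measurable_skewKernelPos (hf : Continuous f) (β γ z : ℝ) :
    Measurable (skewKernelPos a b β γ f z) :=
  Measurable.ite measurableSet_Ioi (by fun_prop) (by fun_prop)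

lemma abs_skewKernelPos_le (ha : 0 < a) (hb : 0 < b) (β γ z y : ℝ) :
    |skewKernelPos a b β γ f z y| ≤ a⁻¹ * (|f (y / a - z / a)| + |β| * |f (y / a + z / a)|) +
      b⁻¹ * (|γ| * |f (y / b - z / a)|) := by
  have hA : 0 ≤ a⁻¹ * (|f (y / a - z / a)| + |β| * |f (y / a + z / a)|) := by positivity
  have hB : 0 ≤ b⁻¹ * (|γ| * |f (y / b - z / a)|) := by positivity
  by_cases hy : 0 < y
  · have h := (abs_add_le (f (y / a - z / a)) (β * f (y / a + z / a))).trans_eq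
      (by rw [abs_mul])
    rw [skewKernelPos, if_pos hy, abs_mul, abs_inv, abs_of_pos ha]
    exact (mul_le_mul_of_nonneg_left h (by positivity)).trans (le_add_of_nonneg_right hB)
  · rw [skewKernelPos, if_neg hy, abs_mul, abs_inv, abs_of_pos hb, abs_mul]
    linarith

lemma integrable_majorant_skewKernelPos (hf : Integrable f) (ha : 0 < a) (hb : 0 < b)
    (β γ z : ℝ) :
    Integrable (fun y => a⁻¹ * (|f (y / a - z / a)| + |β| * |f (y / a + z / a)|) +
      b⁻¹ * (|γ| * |f (y / b - z / a)|)) :=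
  ((((integrable_comp_div_sub hf ha.ne' _).abs.add
    ((integrable_comp_div_add hf ha.ne' _).abs.const_mul _)).const_mul _).add
    (((integrable_comp_div_sub hf hb.ne' _).abs.const_mul _).const_mul _))

lemma integrable_skewKernelPos (hf : Integrable f) (hfc : Continuous f) (ha : 0 < a) (hb : 0 < b)
    (β γ z : ℝ) : Integrable (skewKernelPos a b β γ f z) :=
  (integrable_majorant_skewKernelPos hf ha hb β γ z).mono'
    (measurable_skewKernelPos hfc β γ z).aestronglyMeasurable
    (ae_of_all _ (abs_skewKernelPos_le ha hb β γ z))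

lemma integral_abs_skewKernelPos_le (hf : Integrable f) (hfc : Continuous f) (ha : 0 < a)
    (hb : 0 < b) (β γ z : ℝ) :
    ∫ y, |skewKernelPos a b β γ f z y| ≤ (1 + |β| + |γ|) * ∫ u, |f u| := by
  have hA := (integrable_comp_div_sub hf ha.ne' (z / a)).abs
  have hB := (integrable_comp_div_add hf ha.ne' (z / a)).abs
  have hC := (integrable_comp_div_sub hf hb.ne' (z / a)).abs
  calc ∫ y, |skewKernelPos a b β γ f z y|
      ≤ ∫ y, (a⁻¹ * (|f (y / a - z / a)| + |β| * |f (y / a + z / a)|) +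
          b⁻¹ * (|γ| * |f (y / b - z / a)|)) :=
        integral_mono (integrable_skewKernelPos hf hfc ha hb β γ z).abs
          (integrable_majorant_skewKernelPos hf ha hb β γ z) (abs_skewKernelPos_le ha hb β γ z)
    _ = (1 + |β| + |γ|) * ∫ u, |f u| := by
        rw [integral_add (by exact (hA.add (hB.const_mul _)).const_mul _)
            (by exact (hC.const_mul _).const_mul _),
          integral_const_mul, integral_const_mul, integral_add hA (hB.const_mul _),
          integral_const_mul, integral_const_mul, integral_comp_div_add (fun u => |f u|) ha,
          integral_comp_div_sub (fun u => |f u|) ha, integral_comp_div_sub (fun u => |f u|) hb]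
        field_simp

end SkewKernelPos

section SkewKernelPosGaussian

variable {t a b : ℝ}

lemma integral_skewKernelPos_phiKDeriv (ht : 0 < t) (ha : 0 < a) (hb : 0 < b) (β γ z : ℝ) :
    ∫ y, skewKernelPos a b β γ (phiKDeriv t) z y = (γ - 1 - β) * phiK t (z / a) := by
  have hint := integrable_comp_div_add (integrable_phiKDeriv ht) ha.ne'
  have hIoi : ∫ y in Ioi 0, skewKernelPos a b β γ (phiKDeriv t) z y =
      -((1 + β) * phiK t (z / a)) := by
    rw [setIntegral_congr_fun measurableSet_Ioi (g := fun y =>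
        a⁻¹ * (phiKDeriv t (y / a + -(z / a)) + β * phiKDeriv t (y / a + z / a)))
        fun y (hy : 0 < y) => by rw [skewKernelPos, if_pos hy, sub_eq_add_neg],
      integral_const_mul, integral_add (hint _).integrableOn ((hint _).const_mul β).integrableOn,
      integral_const_mul, integral_Ioi_phiKDeriv_comp ht ha, integral_Ioi_phiKDeriv_comp ht ha,
      phiK_neg]
    field_simp
    ring
  have hIic : ∫ y in Iic 0, skewKernelPos a b β γ (phiKDeriv t) z y = γ * phiK t (z / a) := by
    rw [setIntegral_congr_fun measurableSet_Iic (g := fun y =>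
        b⁻¹ * (γ * phiKDeriv t (y / b + -(z / a))))
        fun y (hy : y ≤ 0) => by rw [skewKernelPos, if_neg hy.not_gt, sub_eq_add_neg],
      integral_const_mul, integral_const_mul, integral_Iic_phiKDeriv_comp ht hb, phiK_neg]
    field_simp
  rw [← integral_add_compl measurableSet_Ioi
      (integrable_skewKernelPos (integrable_phiKDeriv ht) (continuous_phiKDeriv t) ha hb β γ z),
    compl_Ioi, hIoi, hIic]
  ring

lemma hasDerivAt_integral_mul_skewKernelPos {h : ℝ → ℝ} {M : ℝ}
    (hh : AEStronglyMeasurable h) (hM : ∀ y, |h y| ≤ M) (ht : 0 < t) (ha : 0 < a) (hb : 0 < b)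
    (β γ x : ℝ) :
    HasDerivAt (fun z => ∫ y, h y * skewKernelPos a b β γ (phiK t) z y)
      (∫ y, h y * (-a⁻¹ * skewKernelPos a b (-β) γ (phiKDeriv t) x y)) x := by
  obtain ⟨g, hg, hgbd⟩ := exists_integrable_bound_phiKDeriv ht ((|x| + 1) / a)
  have hmeas : ∀ z, AEStronglyMeasurable (fun y => h y * skewKernelPos a b β γ (phiK t) z y) :=
    fun z => hh.mul (measurable_skewKernelPos (continuous_phiK t) β γ z).aestronglyMeasurable
  have hbound : ∀ y, ∀ z ∈ Metric.ball x 1,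
      ‖h y * (-a⁻¹ * skewKernelPos a b (-β) γ (phiKDeriv t) z y)‖ ≤
        M * (a⁻¹ * (a⁻¹ * (g (y / a) + |β| * g (y / a)) + b⁻¹ * (|γ| * g (y / b)))) := by
    intro y z hzx
    have hz : |z / a| ≤ (|x| + 1) / a := by
      rw [Metric.mem_ball, Real.dist_eq] at hzx
      rw [abs_div, abs_of_pos ha]
      gcongr
      linarith [abs_sub_abs_le_abs_sub z x]
    have hK := abs_skewKernelPos_le (f := phiKDeriv t) ha hb (-β) γ z y
    rw [abs_neg] at hK
    have h_sub_a := hgbd (y / a - z / a) (y / a) (by rwa [sub_sub_cancel_left, abs_neg])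
    have h_add_a := hgbd (y / a + z / a) (y / a) (by rwa [add_sub_cancel_left])
    have h_sub_b := hgbd (y / b - z / a) (y / b) (by rwa [sub_sub_cancel_left, abs_neg])
    rw [Real.norm_eq_abs, abs_mul, abs_mul, abs_neg, abs_inv, abs_of_pos ha]
    exact mul_le_mul (hM y) (mul_le_mul_of_nonneg_left (hK.trans (by gcongr)) (by positivity))
      (by positivity) ((abs_nonneg _).trans (hM 0))
  have hg_a := hg.comp_div ha.ne'
  refine (hasDerivAt_integral_of_dominated_loc_of_deriv_le (Metric.ball_mem_nhds x one_pos)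
    (Eventually.of_forall hmeas)
    ((integrable_skewKernelPos (integrable_phiK ht) (continuous_phiK t) ha hb β γ x).bdd_mul
      hh (ae_of_all _ hM))
    (F' := fun z y => h y * (-a⁻¹ * skewKernelPos a b (-β) γ (phiKDeriv t) z y))
    (hh.mul ((measurable_skewKernelPos (continuous_phiKDeriv t) (-β) γ x).const_mul
      _).aestronglyMeasurable)
    (ae_of_all _ hbound) ?_ (ae_of_all _ fun y z _ =>
      (hasDerivAt_skewKernelPos (hasDerivAt_phiK t) β γ y z).const_mul (h y))).2
  exact ((((hg_a.add (hg_a.const_mul |β|)).const_mul a⁻¹).add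
    (((hg.comp_div hb.ne').const_mul |γ|).const_mul b⁻¹)).const_mul a⁻¹).const_mul M

end SkewKernelPosGaussian

lemma abs_integral_mul_le_of_integral_eq_zero {h K : ℝ → ℝ} {c I : ℝ}
    (hh : AEStronglyMeasurable h) (hI : ∀ y, |h y - c| ≤ I) (hK : Integrable K)
    (hK0 : ∫ y, K y = 0) : |∫ y, h y * K y| ≤ I * ∫ y, |K y| := by
  have hsub : Integrable (fun y => (h y - c) * K y) :=
    hK.bdd_mul (hh.sub aestronglyMeasurable_const) (ae_of_all _ hI)
  have hsplit : ∫ y, h y * K y = ∫ y, (h y - c) * K y := by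
    rw [← add_zero (∫ y, (h y - c) * K y), ← mul_zero c, ← hK0, ← integral_const_mul,
      ← integral_add hsub (hK.const_mul c)]
    congr 1 with y
    ring
  rw [hsplit, ← integral_const_mul]
  refine (abs_integral_le_integral_abs).trans (integral_mono hsub.abs (hK.abs.const_mul I) ?_)
  intro y
  simp only [abs_mul]
  exact mul_le_mul_of_nonneg_right (hI y) (abs_nonneg _)

lemma qSkew_eq_skewKernelPos {Dp Dm : ℝ} (hDp : 0 < Dp) (hDm : 0 < Dm) (α t : ℝ) {z : ℝ}
    (hz : 0 < z) (y : ℝ) :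
    qSkew Dp Dm α t z y = skewKernelPos √Dp √Dm (2 * α - 1) (2 * (1 - α)) (phiK t) z y := by
  have hzp : 0 < z / √Dp := div_pos hz (sqrt_pos.2 hDp)
  by_cases hy : 0 < y
  · have hyp : 0 < y / √Dp := div_pos hy (sqrt_pos.2 hDp)
    simp only [qSkew, pSkew, Dfun, skewKernelPos, hz, hy, hzp, hyp, and_self, if_true, add_comm]
  · have hym : ¬ 0 < y / √Dm := fun h => hy (by simpa [sqrt_pos.2 hDm] using h)
    simp only [qSkew, pSkew, Dfun, skewKernelPos, hz, hy, hym, hzp.not_gt, hzp.not_ge, if_true,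
      if_false, and_false, false_and]

lemma pSkew_neg (α t : ℝ) {x y : ℝ} (hx : x ≠ 0) (hy : y ≠ 0) :
    pSkew (1 - α) t (-x) (-y) = pSkew α t x y := by
  have hsum : phiK t (-x + -y) = phiK t (x + y) := by rw [← neg_add, phiK_neg]
  have hdiff : phiK t (-y - -x) = phiK t (y - x) := by rw [← neg_sub', phiK_neg]
  rcases hy.lt_or_gt with hy | hy <;> rcases hx.lt_or_gt with hx | hx <;>
    simp only [pSkew, hsum, hdiff, neg_pos, neg_lt_zero, neg_nonpos, hx, hy, hx.le,
      hx.not_gt, hy.not_gt, hx.not_ge, and_self, and_true, and_false, if_true, if_false] <;> ring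

lemma Dfun_neg (Dp Dm : ℝ) {x : ℝ} (hx : x ≠ 0) : Dfun Dm Dp (-x) = Dfun Dp Dm x := by
  rcases hx.lt_or_gt with hx | hx <;> simp [Dfun, hx, hx.not_gt]

lemma qSkew_neg {Dp Dm : ℝ} (hDp : 0 < Dp) (hDm : 0 < Dm) (α t : ℝ) {z y : ℝ} (hz : z ≠ 0)
    (hy : y ≠ 0) : qSkew Dm Dp (1 - α) t (-z) (-y) = qSkew Dp Dm α t z y := by
  have hD : ∀ x, 0 < Dfun Dp Dm x := fun x => by unfold Dfun; split_ifs <;> assumption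
  rw [qSkew, qSkew, Dfun_neg Dp Dm hz, Dfun_neg Dp Dm hy, neg_div, neg_div,
    pSkew_neg α t (div_ne_zero hz (sqrt_pos.2 (hD z)).ne') (div_ne_zero hy (sqrt_pos.2 (hD y)).ne')]

noncomputable def skewSolution (Dp Dm α t : ℝ) (u₀ : ℝ → ℝ) (x : ℝ) : ℝ :=
  ∫ y, u₀ y * qSkew Dp Dm α t x y

lemma skewSolution_neg {Dp Dm : ℝ} (hDp : 0 < Dp) (hDm : 0 < Dm) (α t : ℝ) (u₀ : ℝ → ℝ) {z : ℝ}
    (hz : z ≠ 0) :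
    skewSolution Dm Dp (1 - α) t (fun y => u₀ (-y)) (-z) = skewSolution Dp Dm α t u₀ z := by
  rw [skewSolution, ← integral_neg_eq_self]
  refine integral_congr_ae ?_
  filter_upwards [Measure.ae_ne volume 0] with y hy
  simp only [neg_neg, qSkew_neg hDp hDm α t hz hy]

section SkewSolution

variable {Dp Dm α t I : ℝ} {u₀ : ℝ → ℝ}

lemma abs_deriv_skewSolution_le_of_pos (hDp : 0 < Dp) (hDm : 0 < Dm) (ht : 0 < t)
    (hα : α ∈ Icc 0 1) (hu : AEStronglyMeasurable u₀) (hI : ∀ y, |u₀ y - u₀ 0| ≤ I) {x : ℝ}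
    (hx : 0 < x) : |deriv (skewSolution Dp Dm α t u₀) x| ≤ 8 / √Dp / √t * I := by
  have ha : 0 < √Dp := sqrt_pos.2 hDp
  have hb : 0 < √Dm := sqrt_pos.2 hDm
  have hI0 : 0 ≤ I := (abs_nonneg _).trans (hI 0)
  have hM : ∀ y, |u₀ y| ≤ |u₀ 0| + I := fun y => by
    linarith [hI y, abs_sub_abs_le_abs_sub (u₀ y) (u₀ 0)]
  have heq : skewSolution Dp Dm α t u₀ =ᶠ[𝓝 x]
      fun z => ∫ y, u₀ y * skewKernelPos √Dp √Dm (2 * α - 1) (2 * (1 - α)) (phiK t) z y :=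
    eventually_of_mem (Ioi_mem_nhds hx) fun z hz => integral_congr_ae (ae_of_all _ fun y => by
      simp only [qSkew_eq_skewKernelPos hDp hDm α t (mem_Ioi.1 hz) y])
  set K := skewKernelPos √Dp √Dm (-(2 * α - 1)) (2 * (1 - α)) (phiKDeriv t) x
  have hK := integrable_skewKernelPos (integrable_phiKDeriv ht) (continuous_phiKDeriv t) ha hb
    (-(2 * α - 1)) (2 * (1 - α)) x
  have hK0 : ∫ y, K y = 0 := by
    rw [integral_skewKernelPos_phiKDeriv ht ha hb]
    ring
  have hKabs : ∫ y, |K y| ≤ 4 * (2 * (√t)⁻¹) := by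
    refine (integral_abs_skewKernelPos_le (integrable_phiKDeriv ht) (continuous_phiKDeriv t) ha hb
      _ _ x).trans ?_
    rw [integral_abs_phiKDeriv ht]
    have hβ : |-(2 * α - 1)| ≤ 1 := by rw [abs_le]; constructor <;> linarith [hα.1, hα.2]
    have hγ : |2 * (1 - α)| ≤ 2 := by rw [abs_le]; constructor <;> linarith [hα.1, hα.2]
    gcongr
    · exact mul_nonneg zero_le_two (phiK_nonneg t 0)
    · linarith
    · exact phiK_zero_le ht
  rw [heq.deriv_eq, (hasDerivAt_integral_mul_skewKernelPos hu hM ht ha hb _ _ x).deriv]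
  calc |∫ y, u₀ y * (-(√Dp)⁻¹ * K y)| = (√Dp)⁻¹ * |∫ y, u₀ y * K y| := by
        simp_rw [mul_left_comm (u₀ _), integral_const_mul, abs_mul, abs_neg, abs_inv, abs_of_pos ha]
    _ ≤ (√Dp)⁻¹ * (I * (4 * (2 * (√t)⁻¹))) := by
        gcongr
        exact (abs_integral_mul_le_of_integral_eq_zero hu hI hK hK0).trans
          (mul_le_mul_of_nonneg_left hKabs hI0)
    _ = 8 / √Dp / √t * I := by ring

lemma abs_deriv_skewSolution_le (hDp : 0 < Dp) (hDm : 0 < Dm) (ht : 0 < t) (hα : α ∈ Icc 0 1)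
    (hu : AEStronglyMeasurable u₀) (hI : ∀ y, |u₀ y - u₀ 0| ≤ I) {x : ℝ} (hx : x ≠ 0) :
    |deriv (skewSolution Dp Dm α t u₀) x| ≤ 8 * ((√Dp)⁻¹ + (√Dm)⁻¹) / √t * I := by
  have hI0 : 0 ≤ I := (abs_nonneg _).trans (hI 0)
  rcases hx.lt_or_gt with hneg | hpos
  · have heq : skewSolution Dp Dm α t u₀ =ᶠ[𝓝 x]
        fun z => skewSolution Dm Dp (1 - α) t (fun y => u₀ (-y)) (-z) :=
      eventually_of_mem (Iio_mem_nhds hneg) fun z hz =>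
        (skewSolution_neg hDp hDm α t u₀ (mem_Iio.1 hz).ne).symm
    rw [heq.deriv_eq, deriv_comp_neg, abs_neg]
    refine (abs_deriv_skewSolution_le_of_pos hDm hDp ht ⟨by linarith [hα.2], by linarith [hα.1]⟩
      (hu.comp_measurePreserving (Measure.measurePreserving_neg volume))
      (fun y => by simpa using hI (-y)) (neg_pos.2 hneg)).trans ?_
    rw [div_eq_mul_inv 8 √Dm]
    gcongr
    linarith [inv_nonneg.2 (sqrt_nonneg Dp)]
  · refine (abs_deriv_skewSolution_le_of_pos hDp hDm ht hα hu hI hpos).trans ?_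
    rw [div_eq_mul_inv 8 √Dp]
    gcongr
    linarith [inv_nonneg.2 (sqrt_nonneg Dm)]

end SkewSolution

lemma abs_sub_le_integral_abs_of_hasDerivAt {f f' : ℝ → ℝ} {a b : ℝ} (hab : a ≤ b)
    (hf : ContinuousOn f (Icc a b)) (hderiv : ∀ x ∈ Ioo a b, HasDerivAt f (f' x) x)
    (hint : Integrable f') : |f b - f a| ≤ ∫ x, |f' x| := by
  rw [← intervalIntegral.integral_eq_sub_of_hasDerivAt_of_le hab hf hderiv hint.intervalIntegrable]
  calc |∫ x in a..b, f' x| ≤ ∫ x in a..b, |f' x| :=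
        intervalIntegral.abs_integral_le_integral_abs hab
    _ = ∫ x in Ioc a b, |f' x| := intervalIntegral.integral_of_le hab
    _ ≤ ∫ x, |f' x| := setIntegral_le_integral hint.abs (ae_of_all _ fun _ => abs_nonneg _)

lemma abs_sub_apply_zero_le_integral_abs {f f' : ℝ → ℝ} (hf : Continuous f)
    (hderiv : ∀ x, x ≠ 0 → HasDerivAt f (f' x) x) (hint : Integrable f') (y : ℝ) :
    |f y - f 0| ≤ ∫ x, |f' x| := by
  rcases le_total 0 y with hy | hy
  · exact abs_sub_le_integral_abs_of_hasDerivAt hy hf.continuousOn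
      (fun x hx => hderiv x hx.1.ne') hint
  · rw [abs_sub_comm]
    exact abs_sub_le_integral_abs_of_hasDerivAt hy hf.continuousOn
      (fun x hx => hderiv x hx.2.ne) hint

lemma alphaOf_mem_Icc {lam Dp Dm : ℝ} (hlam : lam ∈ Ioo 0 1) (hDp : 0 < Dp) (hDm : 0 < Dm) :
    alphaOf lam Dp Dm ∈ Icc 0 1 := by
  have hm : 0 < lam * √Dm := mul_pos hlam.1 (sqrt_pos.2 hDm)
  have hp : 0 < (1 - lam) * √Dp := mul_pos (sub_pos.2 hlam.2) (sqrt_pos.2 hDp)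
  exact ⟨div_nonneg hm.le (by positivity), (div_le_one (by positivity)).2 (by linarith)⟩

theorem space_derivative_bound_general (lam Dp Dm T : ℝ) (hlam : lam ∈ Set.Ioo (0 : ℝ) 1)
    (hDp : 0 < Dp) (hDm : 0 < Dm)
    (u₀ g1 g2 : ℝ → ℝ) (hW : MemW2 lam u₀ g1 g2) :
    ∃ C : ℝ, 0 < C ∧ ∀ t ∈ Set.Ioc 0 T, ∀ x : ℝ, x ≠ 0 →
      |deriv (fun z => ∫ y : ℝ, u₀ y * qSkew Dp Dm (alphaOf lam Dp Dm) t z y) x|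
        ≤ C / Real.sqrt t * ((∫ y : ℝ, |g1 y|) + ∫ y : ℝ, |g2 y|) := by
  obtain ⟨hcont, hderiv, -, -, -, hg1, -⟩ := hW
  refine ⟨8 * ((√Dp)⁻¹ + (√Dm)⁻¹), by positivity, fun t ht x hx => ?_⟩
  have hg2 : 0 ≤ ∫ y, |g2 y| := integral_nonneg fun _ => abs_nonneg _
  calc _ ≤ 8 * ((√Dp)⁻¹ + (√Dm)⁻¹) / √t * ∫ y, |g1 y| :=
        abs_deriv_skewSolution_le hDp hDm ht.1 (alphaOf_mem_Icc hlam hDp hDm)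
          hcont.aestronglyMeasurable (abs_sub_apply_zero_le_integral_abs hcont hderiv hg1) hx
    _ ≤ _ := by gcongr; linarith

/-- For `u₀ ∈ W²`, the spatial derivative of `u(t,x) = ∫ u₀(y) q^α(t,x,y) dy` satisfies
`|∂u/∂x(t,x)| ≤ (C/√t)(‖u₀′‖₁ + ‖u₀″‖₁)` for `t ∈ (0,T]`, uniformly in `x ≠ 0`. -/
theorem space_derivative_bound (lam Dp Dm T : ℝ) (hlam : lam ∈ Set.Ioo (0 : ℝ) 1)
    (hDp : 0 < Dp) (hDm : 0 < Dm) (hT : 0 < T)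
    (u₀ g1 g2 : ℝ → ℝ) (hW : MemW2 lam u₀ g1 g2) :
    ∃ C : ℝ, 0 < C ∧ ∀ t ∈ Set.Ioc 0 T, ∀ x : ℝ, x ≠ 0 →
      |deriv (fun z => ∫ y : ℝ, u₀ y * qSkew Dp Dm (alphaOf lam Dp Dm) t z y) x|
        ≤ C / Real.sqrt t * ((∫ y : ℝ, |g1 y|) + ∫ y : ℝ, |g2 y|) :=
  space_derivative_bound_general lam Dp Dm T hlam hDp hDm u₀ g1 g2 hW
end

section
/- Let a < b be real numbers and f: [a,b] → ℝ be three times continuously differentiable. Then |f′((a+b)/2) − (f(b) − f(a))/(b − a)| ≤ ((b − a)/8)·∫_a^b |f‴(s)| ds. -/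
/-!
Expand `f` to second order at the midpoint `m` with integral remainder `R`. Since
`(b - m)² = (a - m)²`, the quadratic terms cancel in `f b - f a`, leaving
`(b - a) f'(m) - (f b - f a) = R a - R b`; each remainder is at most `((b - a) / 2)² / 2` times
the integral of `|f'''|` over its half of `[a, b]`.
-/

open MeasureTheory Set intervalIntegral Nat

variable {E : Type*} [NormedAddCommGroup E] [NormedSpace ℝ E]

/-- Unlike `taylor_integral_remainder`, which differentiates within `uIcc x₀ x`, this takes all
derivatives within the ambient interval `Icc a b`. -/
theorem taylorWithinEval_Icc_sub_eq_integral [CompleteSpace E] {f : ℝ → E} {a b x₀ x : ℝ} {n : ℕ}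
    (hab : a < b) (hf : ContDiffOn ℝ (n + 1) f (Icc a b)) (hx₀ : x₀ ∈ Icc a b)
    (hx : x ∈ Icc a b) :
    f x - taylorWithinEval f n (Icc a b) x₀ x =
      ∫ t in x₀..x, ((n ! : ℝ)⁻¹ * (x - t) ^ n) • iteratedDerivWithin (n + 1) f (Icc a b) t := by
  have hsub : uIcc x₀ x ⊆ Icc a b := uIcc_subset_Icc hx₀ hx
  have hfn : ContDiffOn ℝ n f (Icc a b) := hf.of_le (by norm_cast; omega)
  have hderiv := intervalIntegral.integral_eq_sub_of_hasDeriv_right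
    ((continuousOn_taylorWithinEval (x := x) (uniqueDiffOn_Icc hab) hfn).mono hsub)
    (fun t ht ↦ (taylorWithinEval_hasDerivAt_Ioo x hab
      ⟨(le_min hx₀.1 hx.1).trans_lt ht.1, ht.2.trans_le (max_le hx₀.2 hx.2)⟩ hfn
      ((hf.differentiableOn_iteratedDerivWithin (by norm_cast; omega)
        (uniqueDiffOn_Icc hab)).mono Ioo_subset_Icc_self)).hasDerivWithinAt)
    (((continuousOn_const.mul ((continuousOn_const.sub continuousOn_id).pow n)).smul
      ((hf.continuousOn_iteratedDerivWithin le_rfl (uniqueDiffOn_Icc hab)).mono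
        hsub)).intervalIntegrable)
  rw [hderiv, taylorWithinEval_self]

theorem norm_integral_smul_le_of_abs_le {k : ℝ → ℝ} {g : ℝ → E} {x₀ x C : ℝ}
    (hg : IntervalIntegrable g volume x₀ x) (hk : ∀ t ∈ uIoc x₀ x, |k t| ≤ C) :
    ‖∫ t in x₀..x, k t • g t‖ ≤ C * |∫ t in x₀..x, ‖g t‖| := by
  rw [norm_integral_eq_norm_integral_uIoc, abs_integral_eq_abs_integral_uIoc,
    abs_of_nonneg (setIntegral_nonneg measurableSet_uIoc fun _ _ ↦ norm_nonneg _),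
    ← MeasureTheory.integral_const_mul]
  refine norm_integral_le_of_norm_le (hg.norm.def'.const_mul C) ?_
  refine (ae_restrict_iff' measurableSet_uIoc).2 (Filter.Eventually.of_forall fun t ht ↦ ?_)
  rw [norm_smul, Real.norm_eq_abs]
  exact mul_le_mul_of_nonneg_right (hk t ht) (norm_nonneg _)

theorem norm_sub_taylorWithinEval_Icc_le [CompleteSpace E] {f : ℝ → E} {a b x₀ x : ℝ} {n : ℕ}
    (hab : a < b) (hf : ContDiffOn ℝ (n + 1) f (Icc a b)) (hx₀ : x₀ ∈ Icc a b)
    (hx : x ∈ Icc a b) :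
    ‖f x - taylorWithinEval f n (Icc a b) x₀ x‖ ≤
      (n ! : ℝ)⁻¹ * |x - x₀| ^ n * |∫ t in x₀..x, ‖iteratedDerivWithin (n + 1) f (Icc a b) t‖| := by
  rw [taylorWithinEval_Icc_sub_eq_integral hab hf hx₀ hx]
  refine norm_integral_smul_le_of_abs_le
    (((hf.continuousOn_iteratedDerivWithin le_rfl (uniqueDiffOn_Icc hab)).mono
      (uIcc_subset_Icc hx₀ hx)).intervalIntegrable) fun t ht ↦ ?_
  rw [abs_mul, abs_pow, abs_of_pos (by positivity : (0 : ℝ) < (n ! : ℝ)⁻¹)]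
  gcongr _ * ?_ ^ n
  exact abs_sub_right_of_mem_uIcc (uIoc_subset_uIcc ht)

theorem taylorWithinEval_two_midpoint_sub (f : ℝ → E) (s : Set ℝ) (a b : ℝ) :
    taylorWithinEval f 2 s ((a + b) / 2) b - taylorWithinEval f 2 s ((a + b) / 2) a =
      (b - a) • derivWithin f s ((a + b) / 2) := by
  simp only [taylor_within_apply, Finset.sum_range_succ, Finset.sum_range_zero,
    iteratedDerivWithin_one]
  have hsq : (b - (a + b) / 2) ^ 2 = (a - (a + b) / 2) ^ 2 := by ring
  rw [hsq]
  module

theorem norm_smul_derivWithin_midpoint_sub_le [CompleteSpace E] {f : ℝ → E} {a b : ℝ}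
    (hab : a < b) (hf : ContDiffOn ℝ 3 f (Icc a b)) :
    ‖(b - a) • derivWithin f (Icc a b) ((a + b) / 2) - (f b - f a)‖ ≤
      (b - a) ^ 2 / 8 * ∫ t in a..b, ‖iteratedDerivWithin 3 f (Icc a b) t‖ := by
  have hm : (a + b) / 2 ∈ Icc a b := ⟨by linarith, by linarith⟩
  have ha : a ∈ Icc a b := left_mem_Icc.2 hab.le
  have hb : b ∈ Icc a b := right_mem_Icc.2 hab.le
  set m := (a + b) / 2 with hm_def
  set R := fun x ↦ f x - taylorWithinEval f 2 (Icc a b) m x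
  set F := fun t ↦ ‖iteratedDerivWithin 3 f (Icc a b) t‖
  have hF : ContinuousOn F (Icc a b) :=
    (hf.continuousOn_iteratedDerivWithin le_rfl (uniqueDiffOn_Icc hab)).norm
  have hRa : ‖R a‖ ≤ (b - a) ^ 2 / 8 * ∫ t in a..m, F t := calc
    ‖R a‖ ≤ (2 ! : ℝ)⁻¹ * |a - m| ^ 2 * |∫ t in m..a, F t| :=
      norm_sub_taylorWithinEval_Icc_le hab hf hm ha
    _ = (b - a) ^ 2 / 8 * ∫ t in a..m, F t := by
      rw [integral_symm, abs_neg, abs_of_nonneg (integral_nonneg hm.1 fun _ _ ↦ norm_nonneg _),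
        sq_abs, hm_def]
      norm_num [Nat.factorial]
      ring
  have hRb : ‖R b‖ ≤ (b - a) ^ 2 / 8 * ∫ t in m..b, F t := calc
    ‖R b‖ ≤ (2 ! : ℝ)⁻¹ * |b - m| ^ 2 * |∫ t in m..b, F t| :=
      norm_sub_taylorWithinEval_Icc_le hab hf hm hb
    _ = (b - a) ^ 2 / 8 * ∫ t in m..b, F t := by
      rw [abs_of_nonneg (integral_nonneg hm.2 fun _ _ ↦ norm_nonneg _), sq_abs, hm_def]
      norm_num [Nat.factorial]
      ring
  calc ‖(b - a) • derivWithin f (Icc a b) m - (f b - f a)‖ = ‖R a - R b‖ := by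
        rw [← taylorWithinEval_two_midpoint_sub]
        congr 1
        simp only [R, m]
        abel
    _ ≤ ‖R a‖ + ‖R b‖ := norm_sub_le _ _
    _ ≤ (b - a) ^ 2 / 8 * ((∫ t in a..m, F t) + ∫ t in m..b, F t) := by linarith
    _ = (b - a) ^ 2 / 8 * ∫ t in a..b, F t := by
      rw [integral_add_adjacent_intervals ((hF.mono (uIcc_subset_Icc ha hm)).intervalIntegrable)
        ((hF.mono (uIcc_subset_Icc hm hb)).intervalIntegrable)]

/-- Midpoint rule error: for `f` three times continuously differentiable on `[a,b]`,
`|f′((a+b)/2) − (f(b) − f(a))/(b − a)| ≤ ((b−a)/8)·∫_a^b |f‴(s)| ds`. -/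
theorem midpoint_derivative_estimate (a b : ℝ) (hab : a < b) (f : ℝ → ℝ)
    (hf : ContDiffOn ℝ 3 f (Set.Icc a b)) :
    |derivWithin f (Set.Icc a b) ((a + b) / 2) - (f b - f a) / (b - a)|
      ≤ (b - a) / 8 * ∫ s in a..b, |iteratedDerivWithin 3 f (Set.Icc a b) s| := by
  have hba : 0 < b - a := sub_pos.2 hab
  have key := norm_smul_derivWithin_midpoint_sub_le hab hf
  simp only [Real.norm_eq_abs, smul_eq_mul] at key
  have hslope : derivWithin f (Icc a b) ((a + b) / 2) - (f b - f a) / (b - a) =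
      ((b - a) * derivWithin f (Icc a b) ((a + b) / 2) - (f b - f a)) / (b - a) := by
    field_simp
  rw [hslope, abs_div, abs_of_pos hba, div_le_iff₀ hba]
  exact key.trans_eq (by ring)
end

section
/- Let a < b be real numbers and f: [a,b] → ℝ be twice continuously differentiable. Then |(f(a) + f(b))/2 − f((a+b)/2)| ≤ ((b − a)/4)·∫_a^b |f″(s)| ds. -/
open MeasureTheory Set intervalIntegral Topology

/-!
Taylor's formula with integral remainder, expanded at the midpoint `m` towards both endpoints,
gives `f b - f m - (b - m) f'(m) = ∫_m^b (b - t) f''(t) dt` and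
`f a - f m + (m - a) f'(m) = ∫_a^m (t - a) f''(t) dt`. Since `b - m = m - a`, the first-order
terms cancel on adding, and both kernels are bounded by `(b - a) / 2`.
-/

/-- `t ↦ f t + (c - t) * f' t` is an antiderivative of `t ↦ (c - t) * f'' t`. -/
theorem integral_sub_mul_eq_of_hasDerivAt {f f' f'' : ℝ → ℝ} {x y : ℝ} (c : ℝ) (hxy : x ≤ y)
    (hf : ContinuousOn f (Icc x y)) (hf' : ContinuousOn f' (Icc x y))
    (hderiv : ∀ t ∈ Ioo x y, HasDerivAt f (f' t) t)
    (hderiv' : ∀ t ∈ Ioo x y, HasDerivAt f' (f'' t) t)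
    (hint : IntervalIntegrable f'' volume x y) :
    ∫ t in x..y, (c - t) * f'' t = f y + (c - y) * f' y - (f x + (c - x) * f' x) := by
  refine integral_eq_sub_of_hasDerivAt_of_le hxy
    (hf.add ((continuousOn_const.sub continuousOn_id).mul hf')) (fun t ht => ?_)
    (hint.continuousOn_mul (by fun_prop))
  have := (hderiv t ht).add (((hasDerivAt_id t).const_sub c).mul (hderiv' t ht))
  simp only [id_eq] at this
  exact this.congr_deriv (by ring)

theorem abs_integral_mul_le_of_abs_le {g k : ℝ → ℝ} {x y M : ℝ} (hxy : x ≤ y)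
    (hg : IntervalIntegrable g volume x y) (hk : ContinuousOn k (Icc x y))
    (hkM : ∀ t ∈ Icc x y, |k t| ≤ M) :
    |∫ t in x..y, k t * g t| ≤ M * ∫ t in x..y, |g t| := by
  rw [← uIcc_of_le hxy] at hk
  calc |∫ t in x..y, k t * g t| ≤ ∫ t in x..y, |k t * g t| :=
        abs_integral_le_integral_abs hxy
    _ ≤ ∫ t in x..y, M * |g t| := by
        refine integral_mono_on hxy (hg.continuousOn_mul hk).abs (hg.abs.const_mul M)
          fun t ht => ?_
        rw [abs_mul]
        exact mul_le_mul_of_nonneg_right (hkM t ht) (abs_nonneg _)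
    _ = M * ∫ t in x..y, |g t| := integral_const_mul M _

theorem ContDiffOn.integral_sub_mul_iteratedDerivWithin_two {f : ℝ → ℝ} {a b x y : ℝ} (c : ℝ)
    (hab : a < b) (hf : ContDiffOn ℝ 2 f (Icc a b)) (hax : a ≤ x) (hxy : x ≤ y) (hyb : y ≤ b) :
    ∫ t in x..y, (c - t) * iteratedDerivWithin 2 f (Icc a b) t
      = f y + (c - y) * derivWithin f (Icc a b) y
        - (f x + (c - x) * derivWithin f (Icc a b) x) := by
  have hU : UniqueDiffOn ℝ (Icc a b) := uniqueDiffOn_Icc hab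
  have hsub : Icc x y ⊆ Icc a b := Icc_subset_Icc hax hyb
  have hnhds : ∀ t ∈ Ioo x y, Icc a b ∈ 𝓝 t := fun t ht =>
    Icc_mem_nhds (hax.trans_lt ht.1) (ht.2.trans_le hyb)
  refine integral_sub_mul_eq_of_hasDerivAt c hxy (hf.continuousOn.mono hsub)
    ((hf.continuousOn_derivWithin hU (by norm_num)).mono hsub) (fun t ht => ?_) (fun t ht => ?_)
    ((hf.continuousOn_iteratedDerivWithin le_rfl hU).mono hsub |>.intervalIntegrable_of_Icc hxy)
  · exact (hf.differentiableOn (by norm_num) t (hsub (Ioo_subset_Icc_self ht)))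
      |>.hasDerivWithinAt.hasDerivAt (hnhds t ht)
  · rw [iteratedDerivWithin_succ, iteratedDerivWithin_one]
    exact ((hf.derivWithin hU (m := 1) (by norm_num)).differentiableOn one_ne_zero t
      (hsub (Ioo_subset_Icc_self ht))).hasDerivWithinAt.hasDerivAt (hnhds t ht)

/-- Trapezoid–midpoint error: for `f` twice continuously differentiable on `[a,b]`,
`|(f(a) + f(b))/2 − f((a+b)/2)| ≤ ((b−a)/4)·∫_a^b |f″(s)| ds`. -/
theorem trapezoid_midpoint_estimate (a b : ℝ) (hab : a < b) (f : ℝ → ℝ)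
    (hf : ContDiffOn ℝ 2 f (Set.Icc a b)) :
    |(f a + f b) / 2 - f ((a + b) / 2)|
      ≤ (b - a) / 4 * ∫ s in a..b, |iteratedDerivWithin 2 f (Set.Icc a b) s| := by
  set m := (a + b) / 2 with hm
  set f'' := iteratedDerivWithin 2 f (Icc a b)
  have ham : a ≤ m := by linarith
  have hmb : m ≤ b := by linarith
  have hf''_int : ∀ x y, a ≤ x → x ≤ y → y ≤ b → IntervalIntegrable f'' volume x y :=
    fun x y hax hxy hyb => (hf.continuousOn_iteratedDerivWithin le_rfl (uniqueDiffOn_Icc hab)).mono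
      (Icc_subset_Icc hax hyb) |>.intervalIntegrable_of_Icc hxy
  have hsplit : (f a + f b) / 2 - f m
      = ((∫ t in m..b, (b - t) * f'' t) - ∫ t in a..m, (a - t) * f'' t) / 2 := by
    rw [hf.integral_sub_mul_iteratedDerivWithin_two b hab ham hmb le_rfl,
      hf.integral_sub_mul_iteratedDerivWithin_two a hab le_rfl ham hmb]
    ring
  have hright : |∫ t in m..b, (b - t) * f'' t| ≤ (b - a) / 2 * ∫ t in m..b, |f'' t| :=
    abs_integral_mul_le_of_abs_le hmb (hf''_int m b ham hmb le_rfl) (by fun_prop)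
      fun t ht => abs_le.2 ⟨by linarith [ht.1, ht.2], by linarith [ht.1, ht.2]⟩
  have hleft : |∫ t in a..m, (a - t) * f'' t| ≤ (b - a) / 2 * ∫ t in a..m, |f'' t| :=
    abs_integral_mul_le_of_abs_le ham (hf''_int a m le_rfl ham hmb) (by fun_prop)
      fun t ht => abs_le.2 ⟨by linarith [ht.1, ht.2], by linarith [ht.1, ht.2]⟩
  rw [← integral_add_adjacent_intervals (hf''_int a m le_rfl ham hmb).abs
    (hf''_int m b ham hmb le_rfl).abs, hsplit, abs_div, abs_two]
  linarith [abs_sub (∫ t in m..b, (b - t) * f'' t) (∫ t in a..m, (a - t) * f'' t)]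
end

section
/- Let u₀: ℝ → ℝ be continuous at 0, four times continuously differentiable on ℝ∖{0} with u₀ and its first four derivatives bounded there, and with u₀^(i) ∈ L¹(ℝ) ∩ L²(ℝ) for i = 1,…,4. Then there exists a constant C > 0, depending only on u₀, such that for every δ ∈ (0,1) there exists a function u_δ: ℝ → ℝ which is four times continuously differentiable on ℝ with bounded derivatives, satisfies u_δ(x) = u₀(x) for |x| > 2δ, u_δ(x) = u₀(0) for |x| ≤ δ, and ‖u₀^(i) − u_δ^(i)‖_{L¹(ℝ)} ≤ C·δ^{2−i} for every i = 0, 1, 2, 3, 4. -/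
/-!
Let `ψ_δ(x) = φ(x / δ)` for a smooth bump `φ` equal to `1` on `[-1, 1]` and to `0` outside
`(-2, 2)`, and put `u_δ = u₀ + ψ_δ (u₀(0) - u₀)`. Then `u_δ - u₀` vanishes for `|x| ≥ 2δ`, and
by the Leibniz rule its `k`-th derivative is a sum of terms `ψ_δ^(j) (u₀(0) - u₀)^(k-j)`. Here
`|ψ_δ^(j)| ≲ δ^(-j)`, while `(u₀(0) - u₀)^(m)` is `O(1)` for `m ≥ 1` and, by the mean value
theorem, `O(δ)` for `m = 0`; so every term is `O(δ^(1-k))`. Integrating over `[-2δ, 2δ]` gives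
`O(δ^(2-k))`.
-/

open MeasureTheory Set Filter Topology

theorem abs_sub_le_mul_abs_of_hasDerivAt_ne {f f' : ℝ → ℝ} {a M : ℝ} (hc : ContinuousAt f a)
    (hd : ∀ y ≠ a, HasDerivAt f (f' y) y) (hM : ∀ y ≠ a, |f' y| ≤ M) (x : ℝ) :
    |f x - f a| ≤ M * |x - a| := by
  have hcont : Continuous f := continuous_iff_continuousAt.2 fun y =>
    if hy : y = a then hy ▸ hc else (hd y hy).continuousAt
  have key : ∀ p q, p < q → a ∉ Ioo p q → |f q - f p| ≤ M * (q - p) := by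
    intro p q hpq ha
    obtain ⟨c, hc, hslope⟩ := exists_hasDerivAt_eq_slope f f' hpq hcont.continuousOn
      fun y hy => hd y (ne_of_mem_of_not_mem hy ha)
    have hca : c ≠ a := ne_of_mem_of_not_mem hc ha
    rw [eq_div_iff (sub_ne_zero.2 hpq.ne')] at hslope
    rw [← hslope, abs_mul, abs_of_pos (sub_pos.2 hpq)]
    exact mul_le_mul_of_nonneg_right (hM c hca) (sub_pos.2 hpq).le
  rcases lt_trichotomy x a with hxa | rfl | hax
  · rw [abs_sub_comm, abs_sub_comm x, abs_of_pos (sub_pos.2 hxa)]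
    exact key x a hxa fun h => lt_irrefl a h.2
  · simp
  · rw [abs_of_pos (sub_pos.2 hax)]
    exact key a x hax fun h => lt_irrefl a h.1

section DerivativeChain

variable {D : ℕ → ℝ → ℝ} {s : Set ℝ} {n : ℕ}

theorem iteratedDeriv_eq_of_hasDerivAt_chain (hs : IsOpen s)
    (hD : ∀ k < n, ∀ x ∈ s, HasDerivAt (D k) (D (k + 1) x) x) :
    ∀ k ≤ n, ∀ x ∈ s, iteratedDeriv k (D 0) x = D k x := by
  intro k
  induction k with
  | zero => simp
  | succ k ih =>
    intro hk x hx
    have hloc : iteratedDeriv k (D 0) =ᶠ[𝓝 x] D k :=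
      eventually_of_mem (hs.mem_nhds hx) fun y hy => ih (by omega) y hy
    rw [iteratedDeriv_succ, hloc.deriv_eq]
    exact (hD k hk x hx).deriv

theorem contDiffOn_of_hasDerivAt_chain (hs : IsOpen s)
    (hD : ∀ k < n, ∀ x ∈ s, HasDerivAt (D k) (D (k + 1) x) x) (hc : ContinuousOn (D n) s) :
    ContDiffOn ℝ n (D 0) s := by
  induction n generalizing D with
  | zero => simpa using hc
  | succ n ih =>
    rw [Nat.cast_succ, contDiffOn_succ_iff_deriv_of_isOpen hs]
    refine ⟨fun x hx => (hD 0 n.succ_pos x hx).differentiableAt.differentiableWithinAt,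
      by simp, ?_⟩
    have hshift := ih (D := fun k => D (k + 1)) (fun k hk x hx => hD (k + 1) (by omega) x hx) hc
    exact hshift.congr fun x hx => (hD 0 n.succ_pos x hx).deriv

end DerivativeChain

theorem abs_iteratedDeriv_mul_le {f g : ℝ → ℝ} {x A B r : ℝ} {k : ℕ}
    (hf : ContDiffAt ℝ k f x) (hg : ContDiffAt ℝ k g x)
    (hfA : ∀ j ≤ k, |iteratedDeriv j f x| ≤ A * r ^ j)
    (hgB : ∀ j ≤ k, |iteratedDeriv j g x| ≤ B * r ^ j) :
    |iteratedDeriv k (fun y => f y * g y) x| ≤ 2 ^ k * (A * B * r ^ k) := by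
  rw [iteratedDeriv_fun_mul hf hg]
  calc |∑ j ∈ Finset.range (k + 1),
          (k.choose j : ℝ) * iteratedDeriv j f x * iteratedDeriv (k - j) g x|
      ≤ ∑ j ∈ Finset.range (k + 1), (k.choose j : ℝ) * (A * B * r ^ k) := by
        refine (Finset.abs_sum_le_sum_abs _ _).trans (Finset.sum_le_sum fun j hj => ?_)
        have hjk : j ≤ k := Nat.lt_succ_iff.1 (Finset.mem_range.1 hj)
        have hfj := hfA j hjk
        have hprod : |iteratedDeriv j f x| * |iteratedDeriv (k - j) g x| ≤ A * B * r ^ k :=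
          calc _ ≤ A * r ^ j * (B * r ^ (k - j)) :=
                mul_le_mul hfj (hgB (k - j) (Nat.sub_le k j)) (abs_nonneg _)
                  ((abs_nonneg _).trans hfj)
            _ = A * B * r ^ k := by rw [← pow_mul_pow_sub r hjk]; ring
        rw [abs_mul, abs_mul, Nat.abs_cast, mul_assoc]
        exact mul_le_mul_of_nonneg_left hprod (Nat.cast_nonneg _)
    _ = 2 ^ k * (A * B * r ^ k) := by
        rw [← Finset.sum_mul, ← Nat.cast_sum, Nat.sum_range_choose, Nat.cast_pow, Nat.cast_two]

theorem HasCompactSupport.exists_abs_iteratedDeriv_le {φ : ℝ → ℝ} {n : ℕ}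
    (hφ : ContDiff ℝ n φ) (hsupp : HasCompactSupport φ) :
    ∃ K, ∀ k ≤ n, ∀ y, |iteratedDeriv k φ y| ≤ K := by
  have hsuppk : ∀ k, HasCompactSupport (iteratedDeriv k φ) := fun k => by
    induction k with
    | zero => simpa
    | succ k ih => rw [iteratedDeriv_succ]; exact ih.deriv
  have hbdd : ∀ k, ∃ C, k ≤ n → ∀ y, |iteratedDeriv k φ y| ≤ C := fun k => by
    by_cases hk : k ≤ n
    · obtain ⟨C, hC⟩ := Continuous.bounded_above_of_compact_support
        (hφ.continuous_iteratedDeriv k (by exact_mod_cast hk)) (hsuppk k)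
      exact ⟨C, fun _ => hC⟩
    · exact ⟨0, fun h => absurd h hk⟩
  choose C hC using hbdd
  refine ⟨∑ k ∈ Finset.range (n + 1), |C k|, fun k hk y => ?_⟩
  calc |iteratedDeriv k φ y| ≤ |C k| := (hC k hk y).trans (le_abs_self _)
    _ ≤ ∑ k ∈ Finset.range (n + 1), |C k| :=
        Finset.single_le_sum (f := fun k => |C k|) (fun _ _ => abs_nonneg _)
          (Finset.mem_range.2 (Nat.lt_succ_of_le hk))

theorem Continuous.abs_le_of_forall_ne {g : ℝ → ℝ} (hg : Continuous g) {a B : ℝ}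
    (h : ∀ x ≠ a, |g x| ≤ B) (x : ℝ) : |g x| ≤ B := by
  have hclosed : IsClosed {x | |g x| ≤ B} := isClosed_le (continuous_abs.comp hg) continuous_const
  refine hclosed.closure_subset_iff.2 (fun y (hy : y ∈ ({a}ᶜ : Set ℝ)) => h y hy) ?_
  rw [(dense_compl_singleton a).closure_eq]
  exact mem_univ x

theorem integral_abs_le_of_abs_le {F : ℝ → ℝ} {r b : ℝ} (hr : 0 ≤ r)
    (hF : ∀ x, r < |x| → F x = 0) (hb : ∀ᵐ x, |F x| ≤ b) : ∫ x, |F x| ≤ 2 * r * b := by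
  rw [← setIntegral_eq_integral_of_forall_compl_eq_zero (s := Icc (-r) r) fun x hx => ?_]
  · calc ∫ x in Icc (-r) r, |F x| ≤ ‖∫ x in Icc (-r) r, |F x|‖ := le_abs_self _
      _ ≤ b * volume.real (Icc (-r) r) :=
          norm_setIntegral_le_of_norm_le_const_ae' measure_Icc_lt_top
            (hb.mono fun x hx _ => by rwa [Real.norm_eq_abs, abs_abs])
      _ = 2 * r * b := by rw [Real.volume_real_Icc_of_le (by linarith)]; ring
  · rw [mem_Icc, ← abs_le, not_le] at hx
    rw [hF x hx, abs_zero]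

noncomputable def unitBump : ContDiffBump (0 : ℝ) := ⟨1, 2, one_pos, one_lt_two⟩

noncomputable def cutoff (δ : ℝ) : ℝ → ℝ := fun x => unitBump (δ⁻¹ * x)

noncomputable def flattenNearZero (f : ℝ → ℝ) (δ : ℝ) : ℝ → ℝ :=
  fun x => f x + cutoff δ x * (f 0 - f x)

section Cutoff

variable {δ x : ℝ}

theorem cutoff_of_abs_le (hδ : 0 < δ) (hx : |x| ≤ δ) : cutoff δ x = 1 :=
  unitBump.one_of_mem_closedBall <| by
    rw [mem_closedBall_zero_iff, Real.norm_eq_abs, abs_mul, abs_inv, abs_of_pos hδ]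
    exact inv_mul_le_one_of_le₀ hx hδ.le

theorem cutoff_of_two_mul_le_abs (hδ : 0 < δ) (hx : 2 * δ ≤ |x|) : cutoff δ x = 0 :=
  unitBump.zero_of_le_dist <| by
    rw [dist_zero_right, Real.norm_eq_abs, abs_mul, abs_inv, abs_of_pos hδ]
    exact (le_inv_mul_iff₀ hδ).2 (show δ * 2 ≤ |x| by linarith)

theorem contDiff_cutoff (δ : ℝ) {n : ℕ∞} : ContDiff ℝ n (cutoff δ) :=
  unitBump.contDiff.comp (contDiff_const.mul contDiff_id)

theorem exists_abs_iteratedDeriv_cutoff_le (n : ℕ) :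
    ∃ K, ∀ k ≤ n, ∀ δ > 0, ∀ x, |iteratedDeriv k (cutoff δ) x| ≤ K * δ⁻¹ ^ k := by
  obtain ⟨K, hK⟩ := unitBump.hasCompactSupport.exists_abs_iteratedDeriv_le unitBump.contDiff
  refine ⟨K, fun k hk δ hδ x => ?_⟩
  unfold cutoff
  rw [iteratedDeriv_comp_const_mul unitBump.contDiff, abs_mul, abs_pow, abs_inv,
    abs_of_pos hδ, mul_comm]
  exact mul_le_mul_of_nonneg_right (hK k hk _) (by positivity)

end Cutoff

section FlattenNearZero

variable {f : ℝ → ℝ} {n : ℕ} {M δ x : ℝ}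

theorem flattenNearZero_of_abs_le (hδ : 0 < δ) (hx : |x| ≤ δ) : flattenNearZero f δ x = f 0 := by
  simp [flattenNearZero, cutoff_of_abs_le hδ hx]

theorem flattenNearZero_of_two_mul_le_abs (hδ : 0 < δ) (hx : 2 * δ ≤ |x|) :
    flattenNearZero f δ x = f x := by
  simp [flattenNearZero, cutoff_of_two_mul_le_abs hδ hx]

theorem contDiff_flattenNearZero (hf : ContDiffOn ℝ n f {0}ᶜ) (hδ : 0 < δ) :
    ContDiff ℝ n (flattenNearZero f δ) := by
  refine contDiff_iff_contDiffAt.2 fun x => ?_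
  by_cases hx : x = 0
  · refine (contDiffAt_const (c := f 0)).congr_of_eventuallyEq ?_
    filter_upwards [Metric.ball_mem_nhds x hδ] with y hy
    rw [Metric.mem_ball, hx, dist_zero_right, Real.norm_eq_abs] at hy
    exact flattenNearZero_of_abs_le hδ hy.le
  · have hfx := hf.contDiffAt (isOpen_compl_singleton.mem_nhds hx)
    exact hfx.add ((contDiff_cutoff δ).contDiffAt.mul (contDiffAt_const.sub hfx))

theorem iteratedDeriv_flattenNearZero_of_two_mul_lt_abs (hδ : 0 < δ) (hx : 2 * δ < |x|)
    (k : ℕ) : iteratedDeriv k (flattenNearZero f δ) x = iteratedDeriv k f x := by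
  refine Filter.EventuallyEq.iteratedDeriv_eq k ?_
  filter_upwards [(isOpen_lt continuous_const continuous_abs).mem_nhds hx] with y hy
  exact flattenNearZero_of_two_mul_le_abs hδ (le_of_lt hy)

theorem abs_iteratedDeriv_const_sub_le (hδ : δ ∈ Ioc 0 1)
    (hM : ∀ k ≤ n, ∀ x ≠ 0, |iteratedDeriv k f x| ≤ M) (hlip : ∀ x, |f x - f 0| ≤ M * |x|)
    {m : ℕ} (hm : m ≤ n) (hx : x ≠ 0) (hx2 : |x| ≤ 2 * δ) :
    |iteratedDeriv m (fun y => f 0 - f y) x| ≤ 2 * M * δ * δ⁻¹ ^ m := by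
  have hM0 : 0 ≤ M := by simpa using (abs_nonneg _).trans (hlip 1)
  cases m with
  | zero =>
    rw [iteratedDeriv_zero, abs_sub_comm, pow_zero, mul_one]
    calc |f x - f 0| ≤ M * |x| := hlip x
      _ ≤ M * (2 * δ) := mul_le_mul_of_nonneg_left hx2 hM0
      _ = 2 * M * δ := by ring
  | succ m =>
    rw [iteratedDeriv_const_sub m.succ_pos, iteratedDeriv_neg, abs_neg]
    have hpow : 1 ≤ δ⁻¹ ^ m := one_le_pow₀ ((one_le_inv₀ hδ.1).2 hδ.2)
    calc |iteratedDeriv (m + 1) f x| ≤ M := hM _ hm x hx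
      _ ≤ 2 * M * δ⁻¹ ^ m := by nlinarith
      _ = 2 * M * δ * δ⁻¹ ^ (m + 1) := by
          rw [pow_succ', ← mul_assoc, mul_assoc (2 * M) δ, mul_inv_cancel₀ hδ.1.ne', mul_one]

theorem abs_iteratedDeriv_sub_flattenNearZero_le {K : ℝ} {k : ℕ}
    (hf : ContDiffOn ℝ n f {0}ᶜ) (hM : ∀ k ≤ n, ∀ x ≠ 0, |iteratedDeriv k f x| ≤ M)
    (hlip : ∀ x, |f x - f 0| ≤ M * |x|)
    (hK : ∀ j ≤ n, ∀ y, |iteratedDeriv j (cutoff δ) y| ≤ K * δ⁻¹ ^ j)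
    (hδ : δ ∈ Ioc 0 1) (hk : k ≤ n) (hx : x ≠ 0) (hx2 : |x| ≤ 2 * δ) :
    |iteratedDeriv k f x - iteratedDeriv k (flattenNearZero f δ) x| ≤
      2 ^ k * (K * (2 * M * δ) * δ⁻¹ ^ k) := by
  have hfx : ContDiffAt ℝ k f x :=
    (hf.contDiffAt (isOpen_compl_singleton.mem_nhds hx)).of_le (by exact_mod_cast hk)
  have hgap : ContDiffAt ℝ k (fun y => f 0 - f y) x := contDiffAt_const.sub hfx
  have hψ : ContDiffAt ℝ k (cutoff δ) x := (contDiff_cutoff δ).contDiffAt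
  have hsplit : iteratedDeriv k (flattenNearZero f δ) x =
      iteratedDeriv k f x + iteratedDeriv k (fun y => cutoff δ y * (f 0 - f y)) x :=
    iteratedDeriv_fun_add hfx (hψ.mul hgap)
  rw [hsplit, sub_add_cancel_left, abs_neg]
  exact abs_iteratedDeriv_mul_le hψ hgap (fun j hj => hK j (hj.trans hk) x)
    fun j hj => abs_iteratedDeriv_const_sub_le hδ hM hlip (hj.trans hk) hx hx2

theorem exists_abs_iteratedDeriv_sub_flattenNearZero_le (hf : ContDiffOn ℝ n f {0}ᶜ)
    (hM : ∀ k ≤ n, ∀ x ≠ 0, |iteratedDeriv k f x| ≤ M) (hlip : ∀ x, |f x - f 0| ≤ M * |x|) :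
    ∃ C, 0 ≤ C ∧ ∀ δ ∈ Ioc (0 : ℝ) 1, ∀ k ≤ n, ∀ x ≠ 0,
      |iteratedDeriv k f x - iteratedDeriv k (flattenNearZero f δ) x| ≤ C * δ * δ⁻¹ ^ k := by
  obtain ⟨K, hK⟩ := exists_abs_iteratedDeriv_cutoff_le n
  have hK0 : 0 ≤ K := by simpa using (abs_nonneg _).trans (hK 0 n.zero_le 1 one_pos 0)
  have hM0 : 0 ≤ M := by simpa using (abs_nonneg _).trans (hlip 1)
  refine ⟨2 ^ n * K * (2 * M), by positivity, fun δ hδ k hk x hx => ?_⟩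
  have hδ0 : 0 < δ := hδ.1
  rcases le_or_gt |x| (2 * δ) with hx2 | hx2
  · calc _ ≤ 2 ^ k * (K * (2 * M * δ) * δ⁻¹ ^ k) :=
          abs_iteratedDeriv_sub_flattenNearZero_le hf hM hlip (hK · · δ hδ0) hδ hk hx hx2
      _ ≤ 2 ^ n * (K * (2 * M * δ) * δ⁻¹ ^ k) := by gcongr; norm_num
      _ = 2 ^ n * K * (2 * M) * δ * δ⁻¹ ^ k := by ring
  · rw [iteratedDeriv_flattenNearZero_of_two_mul_lt_abs hδ0 hx2, sub_self, abs_zero]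
    positivity

theorem exists_abs_iteratedDeriv_flattenNearZero_le (hf : ContDiffOn ℝ n f {0}ᶜ)
    (hM : ∀ k ≤ n, ∀ x ≠ 0, |iteratedDeriv k f x| ≤ M) (hlip : ∀ x, |f x - f 0| ≤ M * |x|) :
    ∀ δ ∈ Ioc (0 : ℝ) 1, ∀ k ≤ n, ∃ B, ∀ x, |iteratedDeriv k (flattenNearZero f δ) x| ≤ B := by
  obtain ⟨C, -, hC⟩ := exists_abs_iteratedDeriv_sub_flattenNearZero_le hf hM hlip
  intro δ hδ k hk
  refine ⟨M + C * δ * δ⁻¹ ^ k, Continuous.abs_le_of_forall_ne (a := 0)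
    ((contDiff_flattenNearZero hf hδ.1).continuous_iteratedDeriv k (by exact_mod_cast hk))
    fun x hx => ?_⟩
  calc |iteratedDeriv k (flattenNearZero f δ) x|
      = |iteratedDeriv k f x - (iteratedDeriv k f x - iteratedDeriv k (flattenNearZero f δ) x)| :=
        by rw [sub_sub_cancel]
    _ ≤ |iteratedDeriv k f x| + |iteratedDeriv k f x - iteratedDeriv k (flattenNearZero f δ) x| :=
        abs_sub _ _
    _ ≤ M + C * δ * δ⁻¹ ^ k := add_le_add (hM k hk x hx) (hC δ hδ k hk x hx)

theorem exists_integral_abs_iteratedDeriv_sub_flattenNearZero_le (hf : ContDiffOn ℝ n f {0}ᶜ)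
    (hM : ∀ k ≤ n, ∀ x ≠ 0, |iteratedDeriv k f x| ≤ M) (hlip : ∀ x, |f x - f 0| ≤ M * |x|) :
    ∃ C, 0 < C ∧ ∀ δ ∈ Ioc (0 : ℝ) 1, ∀ k ≤ n,
      ∫ x, |iteratedDeriv k f x - iteratedDeriv k (flattenNearZero f δ) x| ≤
        C * δ ^ 2 * δ⁻¹ ^ k := by
  obtain ⟨C, hC0, hC⟩ := exists_abs_iteratedDeriv_sub_flattenNearZero_le hf hM hlip
  refine ⟨4 * C + 1, by positivity, fun δ hδ k hk => ?_⟩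
  have hδ0 : 0 < δ := hδ.1
  calc _ ≤ 2 * (2 * δ) * (C * δ * δ⁻¹ ^ k) :=
        integral_abs_le_of_abs_le (by positivity)
          (fun x hx => by rw [iteratedDeriv_flattenNearZero_of_two_mul_lt_abs hδ0 hx, sub_self])
          (by filter_upwards [Measure.ae_ne volume 0] with x hx using hC δ hδ k hk x hx)
    _ = 4 * C * (δ ^ 2 * δ⁻¹ ^ k) := by ring
    _ ≤ (4 * C + 1) * (δ ^ 2 * δ⁻¹ ^ k) := by gcongr; linarith
    _ = (4 * C + 1) * δ ^ 2 * δ⁻¹ ^ k := by ring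

end FlattenNearZero

theorem exists_flattenNearZero_of_hasDerivAt_chain {D : ℕ → ℝ → ℝ} {n : ℕ} {M : ℝ}
    (hn : 0 < n) (h0 : ContinuousAt (D 0) 0)
    (hD : ∀ k < n, ∀ x ∈ ({0}ᶜ : Set ℝ), HasDerivAt (D k) (D (k + 1) x) x)
    (hc : ContinuousOn (D n) {0}ᶜ) (hM : ∀ k ≤ n, ∀ x ≠ 0, |D k x| ≤ M) :
    ∃ C, 0 < C ∧ ∀ δ ∈ Ioc (0 : ℝ) 1, ContDiff ℝ n (flattenNearZero (D 0) δ) ∧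
      (∀ k ≤ n, ∃ B, ∀ x, |iteratedDeriv k (flattenNearZero (D 0) δ) x| ≤ B) ∧
      ∀ k ≤ n, ∫ x, |D k x - iteratedDeriv k (flattenNearZero (D 0) δ) x| ≤
        C * δ ^ 2 * δ⁻¹ ^ k := by
  have hderiv := iteratedDeriv_eq_of_hasDerivAt_chain isOpen_compl_singleton hD
  have hf := contDiffOn_of_hasDerivAt_chain isOpen_compl_singleton hD hc
  have hbound : ∀ k ≤ n, ∀ x ≠ 0, |iteratedDeriv k (D 0) x| ≤ M := fun k hk x hx => by
    rw [hderiv k hk x hx]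
    exact hM k hk x hx
  have hlip : ∀ x, |D 0 x - D 0 0| ≤ M * |x| := by
    simpa using abs_sub_le_mul_abs_of_hasDerivAt_ne (a := 0) h0 (hD 0 hn) (hM 1 hn)
  obtain ⟨C, hC, hL1⟩ := exists_integral_abs_iteratedDeriv_sub_flattenNearZero_le hf hbound hlip
  refine ⟨C, hC, fun δ hδ => ⟨contDiff_flattenNearZero hf hδ.1,
    exists_abs_iteratedDeriv_flattenNearZero_le hf hbound hlip δ hδ, fun k hk => ?_⟩⟩
  refine le_of_eq_of_le (integral_congr_ae ?_) (hL1 δ hδ k hk)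
  filter_upwards [Measure.ae_ne volume 0] with x hx
  rw [hderiv k hk x hx]

theorem smoothing_approximation_general (u₀ g1 g2 g3 g4 : ℝ → ℝ)
    (hcont : ContinuousAt u₀ 0)
    (hd1 : ∀ x : ℝ, x ≠ 0 → HasDerivAt u₀ (g1 x) x)
    (hd2 : ∀ x : ℝ, x ≠ 0 → HasDerivAt g1 (g2 x) x)
    (hd3 : ∀ x : ℝ, x ≠ 0 → HasDerivAt g2 (g3 x) x)
    (hd4 : ∀ x : ℝ, x ≠ 0 → HasDerivAt g3 (g4 x) x)
    (hg4c : ContinuousOn g4 {(0 : ℝ)}ᶜ)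
    (hbdd : ∃ M : ℝ, ∀ x : ℝ, x ≠ 0 →
      |u₀ x| ≤ M ∧ |g1 x| ≤ M ∧ |g2 x| ≤ M ∧ |g3 x| ≤ M ∧ |g4 x| ≤ M) :
    ∃ C : ℝ, 0 < C ∧ ∀ δ ∈ Set.Ioo (0 : ℝ) 1, ∃ uδ : ℝ → ℝ,
      ContDiff ℝ 4 uδ ∧
      (∀ i : ℕ, i ≤ 4 → ∃ B : ℝ, ∀ x : ℝ, |iteratedDeriv i uδ x| ≤ B) ∧
      (∀ x : ℝ, 2 * δ < |x| → uδ x = u₀ x) ∧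
      (∀ x : ℝ, |x| ≤ δ → uδ x = u₀ 0) ∧
      (∫ x : ℝ, |u₀ x - uδ x|) ≤ C * δ ^ 2 ∧
      (∫ x : ℝ, |g1 x - deriv uδ x|) ≤ C * δ ∧
      (∫ x : ℝ, |g2 x - iteratedDeriv 2 uδ x|) ≤ C ∧
      (∫ x : ℝ, |g3 x - iteratedDeriv 3 uδ x|) ≤ C / δ ∧
      (∫ x : ℝ, |g4 x - iteratedDeriv 4 uδ x|) ≤ C / δ ^ 2 := by
  obtain ⟨M, hM⟩ := hbdd
  let D : ℕ → ℝ → ℝ := fun k => [u₀, g1, g2, g3, g4].getD k 0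
  have hchain : ∀ k < 4, ∀ x ∈ ({0}ᶜ : Set ℝ), HasDerivAt (D k) (D (k + 1) x) x := by
    intro k hk x hx
    interval_cases k
    exacts [hd1 x hx, hd2 x hx, hd3 x hx, hd4 x hx]
  have hbound : ∀ k ≤ 4, ∀ x ≠ 0, |D k x| ≤ M := by
    intro k hk x hx
    interval_cases k
    exacts [(hM x hx).1, (hM x hx).2.1, (hM x hx).2.2.1, (hM x hx).2.2.2.1, (hM x hx).2.2.2.2]
  obtain ⟨C, hC, happrox⟩ :=
    exists_flattenNearZero_of_hasDerivAt_chain four_pos hcont hchain hg4c hbound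
  refine ⟨C, hC, fun δ hδ => ?_⟩
  obtain ⟨hsmooth, hbdd, hL1⟩ := happrox δ (Ioo_subset_Ioc_self hδ)
  have hδ0 : δ ≠ 0 := hδ.1.ne'
  have hL1₁ := hL1 1 (by norm_num)
  rw [iteratedDeriv_one] at hL1₁
  exact ⟨flattenNearZero u₀ δ, hsmooth, hbdd,
    fun x hx => flattenNearZero_of_two_mul_le_abs hδ.1 hx.le,
    fun x hx => flattenNearZero_of_abs_le hδ.1 hx,
    (hL1 0 (by norm_num)).trans_eq (by simp), hL1₁.trans_eq (by field_simp),
    (hL1 2 (by norm_num)).trans_eq (by field_simp),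
    (hL1 3 (by norm_num)).trans_eq (by field_simp),
    (hL1 4 (by norm_num)).trans_eq (by field_simp)⟩

/-- Smoothing of the initial data near the interface: for `u₀` continuous at `0`,
four times continuously differentiable on `ℝ∖{0}` with bounded derivatives
`g1,…,g4 ∈ L¹ ∩ L²`, there is `C > 0` such that for every `δ ∈ (0,1)` there is a
`C⁴` function `u_δ` with bounded derivatives, equal to `u₀` for `|x| > 2δ`, equal to
`u₀(0)` for `|x| ≤ δ`, and with `‖u₀^{(i)} − u_δ^{(i)}‖₁ ≤ C·δ^{2−i}` for `i = 0,…,4`. -/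
theorem smoothing_approximation (u₀ g1 g2 g3 g4 : ℝ → ℝ)
    (hcont : ContinuousAt u₀ 0)
    (hd1 : ∀ x : ℝ, x ≠ 0 → HasDerivAt u₀ (g1 x) x)
    (hd2 : ∀ x : ℝ, x ≠ 0 → HasDerivAt g1 (g2 x) x)
    (hd3 : ∀ x : ℝ, x ≠ 0 → HasDerivAt g2 (g3 x) x)
    (hd4 : ∀ x : ℝ, x ≠ 0 → HasDerivAt g3 (g4 x) x)
    (hg4c : ContinuousOn g4 {(0 : ℝ)}ᶜ)
    (hbdd : ∃ M : ℝ, ∀ x : ℝ, x ≠ 0 →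
      |u₀ x| ≤ M ∧ |g1 x| ≤ M ∧ |g2 x| ≤ M ∧ |g3 x| ≤ M ∧ |g4 x| ≤ M)
    (hint : Integrable g1 ∧ Integrable g2 ∧ Integrable g3 ∧ Integrable g4)
    (hL2 : MemLp g1 2 ∧ MemLp g2 2 ∧ MemLp g3 2 ∧ MemLp g4 2) :
    ∃ C : ℝ, 0 < C ∧ ∀ δ ∈ Set.Ioo (0 : ℝ) 1, ∃ uδ : ℝ → ℝ,
      ContDiff ℝ 4 uδ ∧
      (∀ i : ℕ, i ≤ 4 → ∃ B : ℝ, ∀ x : ℝ, |iteratedDeriv i uδ x| ≤ B) ∧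
      (∀ x : ℝ, 2 * δ < |x| → uδ x = u₀ x) ∧
      (∀ x : ℝ, |x| ≤ δ → uδ x = u₀ 0) ∧
      (∫ x : ℝ, |u₀ x - uδ x|) ≤ C * δ ^ 2 ∧
      (∫ x : ℝ, |g1 x - deriv uδ x|) ≤ C * δ ∧
      (∫ x : ℝ, |g2 x - iteratedDeriv 2 uδ x|) ≤ C ∧
      (∫ x : ℝ, |g3 x - iteratedDeriv 3 uδ x|) ≤ C / δ ∧
      (∫ x : ℝ, |g4 x - iteratedDeriv 4 uδ x|) ≤ C / δ ^ 2 :=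
  smoothing_approximation_general u₀ g1 g2 g3 g4 hcont hd1 hd2 hd3 hd4 hg4c hbdd
end
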